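/- arXiv:1810.04530 — 2 statements merged into one kernel-verified Lean document; each statement's English description precedes it below -/
import Mathlib

section
/- Let N ≥ 2 and let f₁, …, f_N : [0,1] → [0,1] be strictly monotone contractions (Lipschitz with constant < 1) with f_n((0,1)) ∩ f_m((0,1)) = ∅ for all n ≠ m, forming an iterated function system whose attractor A_* = ⋂_{m∈ℕ} A_m (where A₀ = [0,1] and A_m = ⋃_{n=1}^N f_n(A_{m−1})) has Lebesgue measure zero, and let g ∈ L¹([0,1]). Define P₀ : L¹([0,1]) → L¹([0,1]) by P₀f = ∑_{n=1}^N |f_n′|·(f∘f_n). Then the equation φ(x) = ∑_{n=1}^N |f_n′(x)| φ(f_n(x)) + g(x) has a solution φ ∈ L¹([0,1]) if and only if the series ∑_{m=0}^∞ P₀ᵐg converges in L¹([0,1]); moreover, every solution φ ∈ L¹([0,1]) equals ∑_{m=0}^∞ P₀ᵐg (a.e.), so the solution is unique when it exists. -/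
open MeasureTheory Filter Topology

/-- Let `N ≥ 2` and let `f₁, …, f_N : [0,1] → [0,1]` be strictly monotone
contractions (Lipschitz with constant `< 1`) with `f_n((0,1)) ∩ f_m((0,1)) = ∅` for
`n ≠ m`, forming an iterated function system whose attractor `A_* = ⋂ₘ A_m` (where
`A₀ = [0,1]`, `A_m = ⋃ₙ f_n(A_{m−1})`) has Lebesgue measure zero, and let
`g ∈ L¹([0,1])`. Define `P₀ f = ∑ₙ |f_n′| (f ∘ f_n)` with `f_n′` the a.e. derivatives.
Then `φ(x) = ∑ₙ |f_n′(x)| φ(f_n(x)) + g(x)` has a solution `φ ∈ L¹([0,1])` iff the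
series `∑ₘ P₀ᵐ g` converges in `L¹([0,1])`; moreover every solution equals `∑ₘ P₀ᵐ g`
a.e., so the solution is unique when it exists. -/
theorem stmt16 (N : ℕ) (hN : 2 ≤ N) (f : Fin N → ℝ → ℝ)
    (hmaps : ∀ n, Set.MapsTo (f n) (Set.Icc 0 1) (Set.Icc 0 1))
    (hmono : ∀ n, StrictMonoOn (f n) (Set.Icc 0 1) ∨ StrictAntiOn (f n) (Set.Icc 0 1))
    (hlip : ∀ n, ∃ K : NNReal, K < 1 ∧ LipschitzOnWith K (f n) (Set.Icc 0 1))
    (hdisj : ∀ n m, n ≠ m →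
      Disjoint (f n '' Set.Ioo 0 1) (f m '' Set.Ioo 0 1))
    (f' : Fin N → ℝ → ℝ)
    (hf' : ∀ n, ∀ᵐ x ∂(volume.restrict (Set.Icc (0 : ℝ) 1)),
      HasDerivWithinAt (f n) (f' n x) (Set.Icc 0 1) x)
    (P₀ : (ℝ → ℝ) → (ℝ → ℝ))
    (hP₀ : ∀ F : ℝ → ℝ, ∀ x : ℝ, P₀ F x = ∑ n, |f' n x| * F (f n x))
    (A : ℕ → Set ℝ) (hA0 : A 0 = Set.Icc 0 1)
    (hAsucc : ∀ m : ℕ, A (m + 1) = ⋃ n, f n '' A m)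
    (hattr : volume (⋂ m, A m) = 0)
    (g : ℝ → ℝ) (hg : Integrable g (volume.restrict (Set.Icc 0 1))) :
    ((∃ φ : ℝ → ℝ, Integrable φ (volume.restrict (Set.Icc 0 1)) ∧
        (∀ᵐ x ∂(volume.restrict (Set.Icc (0 : ℝ) 1)),
          φ x = (∑ n, |f' n x| * φ (f n x)) + g x)) ↔
      (∃ s : ℝ → ℝ, Integrable s (volume.restrict (Set.Icc 0 1)) ∧
        Tendsto (fun M : ℕ =>
            ∫ x in Set.Icc (0 : ℝ) 1, |(∑ m ∈ Finset.range M, (P₀^[m]) g x) - s x|)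
          atTop (𝓝 0))) ∧
    (∀ φ : ℝ → ℝ, Integrable φ (volume.restrict (Set.Icc 0 1)) →
      (∀ᵐ x ∂(volume.restrict (Set.Icc (0 : ℝ) 1)),
        φ x = (∑ n, |f' n x| * φ (f n x)) + g x) →
      Tendsto (fun M : ℕ =>
          ∫ x in Set.Icc (0 : ℝ) 1, |(∑ m ∈ Finset.range M, (P₀^[m]) g x) - φ x|)
        atTop (𝓝 0)) := by
  have hI : MeasurableSet (Set.Icc (0:ℝ) 1) := measurableSet_Icc
  set I : Set ℝ := Set.Icc (0:ℝ) 1 with hIdef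
  set μ : Measure ℝ := volume.restrict I with hμdef
  -- the clamped extensions
  set cl : ℝ → ℝ := fun x => max 0 (min 1 x) with hcl
  have hcl_mem : ∀ x, cl x ∈ I := by
    intro x
    constructor
    · exact le_max_left _ _
    · simp only [hcl, max_le_iff]
      exact ⟨zero_le_one, min_le_left _ _⟩
  have hcl_id : ∀ x ∈ I, cl x = x := by
    intro x hx
    simp only [hcl]
    rw [min_eq_right hx.2, max_eq_right hx.1]
  set fe : Fin N → ℝ → ℝ := fun n x => f n (cl x) with hfe
  have hfe_eq : ∀ n, ∀ x ∈ I, fe n x = f n x := by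
    intro n x hx; simp only [hfe, hcl_id x hx]
  have hfe_mem : ∀ n x, fe n x ∈ I := fun n x => hmaps n (hcl_mem x)
  have hfe_cont : ∀ n, Continuous (fe n) := by
    intro n
    have h1 : Continuous cl := by
      simp only [hcl]; fun_prop
    obtain ⟨K, -, hK⟩ := hlip n
    have : ContinuousOn (f n ∘ cl) Set.univ :=
      hK.continuousOn.comp (h1.continuousOn (s := Set.univ)) (fun x _ => hcl_mem x)
    rw [← continuousOn_univ]
    exact this
  have hfe_meas : ∀ n, Measurable (fe n) := fun n => (hfe_cont n).measurable
  have hinj : ∀ n, Set.InjOn (fe n) I := by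
    intro n x hx y hy hxy
    rw [hfe_eq n x hx, hfe_eq n y hy] at hxy
    rcases hmono n with h | h
    · exact h.injOn hx hy hxy
    · exact h.injOn hx hy hxy
  -- derivatives of the extensions
  set d : Fin N → ℝ → ℝ := fun n => deriv (fe n) with hd
  have hd_meas : ∀ n, Measurable (d n) := fun n => measurable_deriv (fe n)
  set D : Fin N → Set ℝ := fun n => Set.Ioo (0:ℝ) 1 ∩ {x | DifferentiableAt ℝ (fe n) x}
    with hDdef
  have hD_meas : ∀ n, MeasurableSet (D n) :=
    fun n => measurableSet_Ioo.inter (measurableSet_of_differentiableAt ℝ (fe n))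
  have hD_subI : ∀ n, D n ⊆ I := fun n => Set.inter_subset_left.trans Set.Ioo_subset_Icc_self
  have hD_deriv : ∀ n, ∀ x ∈ D n, HasDerivAt (fe n) (d n x) x :=
    fun n x hx => hx.2.hasDerivAt
  have hIoo_ae : ∀ᵐ x ∂μ, x ∈ Set.Ioo (0:ℝ) 1 := by
    rw [ae_iff, hμdef, Measure.restrict_apply' hI]
    refine measure_mono_null (fun x hx => ?_) (Set.Finite.measure_zero
      (Set.finite_singleton (1:ℝ) |>.insert 0) volume)
    obtain ⟨hx1, hx2⟩ := hx
    simp only [Set.mem_setOf_eq, Set.mem_Ioo, not_and_or, not_lt] at hx1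
    rcases hx1 with h | h
    · exact Set.mem_insert_iff.2 (Or.inl (le_antisymm h hx2.1))
    · exact Set.mem_insert_iff.2 (Or.inr (le_antisymm hx2.2 h))
  have hGood : ∀ n, ∀ᵐ x ∂μ, x ∈ D n ∧ d n x = f' n x := by
    intro n
    filter_upwards [hf' n, hIoo_ae, ae_restrict_mem hI] with x hx hIoo hxI
    have hfeD : HasDerivWithinAt (fe n) (f' n x) I x :=
      hx.congr (fun y hy => hfe_eq n y hy) (hfe_eq n x hxI)
    have hda : HasDerivAt (fe n) (f' n x) x :=
      hfeD.hasDerivAt (Icc_mem_nhds hIoo.1 hIoo.2)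
    exact ⟨⟨hIoo, hda.differentiableAt⟩, hda.deriv⟩
  have hD_ae : ∀ n, ∀ᵐ x ∂μ, x ∈ D n := by
    intro n; filter_upwards [hGood n] with x hx using hx.1
  have hIDnull : ∀ n, volume (I \ D n) = 0 := by
    intro n
    have := (ae_iff.1 (hD_ae n))
    rw [hμdef, Measure.restrict_apply' hI] at this
    refine measure_mono_null (fun x hx => ?_) this
    exact ⟨hx.2, hx.1⟩
  -- change of variables
  have cov : ∀ n (T : Set ℝ), MeasurableSet T → T ⊆ D n → ∀ G : ℝ → ENNReal,
      ∫⁻ x in T, ENNReal.ofReal |d n x| * G (fe n x) = ∫⁻ y in fe n '' T, G y := by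
    intro n T hT hTD G
    have hderiv : ∀ x ∈ T, HasFDerivWithinAt (fe n)
        ((1 : ℝ →L[ℝ] ℝ).smulRight (d n x)) T x :=
      fun x hx => ((hD_deriv n x (hTD hx)).hasDerivWithinAt).hasFDerivWithinAt
    have hinjT : Set.InjOn (fe n) T := (hinj n).mono (hTD.trans (hD_subI n))
    have := lintegral_image_eq_lintegral_abs_det_fderiv_mul volume hT hderiv hinjT G
    simpa [ContinuousLinearMap.smulRight_one_eq_toSpanSingleton, ContinuousLinearMap.det_toSpanSingleton] using this.symm
  have himg : ∀ n (T : Set ℝ), MeasurableSet T → T ⊆ D n →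
      MeasurableSet (fe n '' T) := by
    intro n T hT hTD
    exact hT.image_of_continuousOn_injOn ((hfe_cont n).continuousOn)
      ((hinj n).mono (hTD.trans (hD_subI n)))
  -- a.e. transfer to subsets of I
  have aeT : ∀ (p : ℝ → Prop), (∀ᵐ x ∂μ, p x) → ∀ T : Set ℝ, T ⊆ I →
      ∀ᵐ x ∂(volume.restrict T), p x := by
    intro p hp T hT
    exact ae_mono (Measure.restrict_mono hT le_rfl) hp
  -- congruence lemma : a.e. equal functions give a.e. equal terms
  have congrL : ∀ (F G : ℝ → ℝ), F =ᵐ[μ] G → ∀ n,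
      (fun x => |f' n x| * F (f n x)) =ᵐ[μ] (fun x => |f' n x| * G (f n x)) := by
    intro F G h n
    have hE : volume ({y | ¬ F y = G y} ∩ I) = 0 := by
      have := ae_iff.1 h
      rwa [hμdef, Measure.restrict_apply' hI] at this
    set E : Set ℝ := {y | ¬ F y = G y} ∩ I with hEdef
    set U : Set ℝ := toMeasurable volume E with hUdef
    have hU_meas : MeasurableSet U := measurableSet_toMeasurable _ _
    have hU_null : volume U = 0 := by rw [hUdef, measure_toMeasurable]; exact hE
    set Z : Set ℝ := D n ∩ fe n ⁻¹' U with hZdef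
    have hZ_meas : MeasurableSet Z := (hD_meas n).inter (hfe_meas n hU_meas)
    have himgZ : volume (fe n '' Z) = 0 :=
      measure_mono_null (fun y ⟨z, hz, hzy⟩ => hzy ▸ hz.2) hU_null
    have hlz : ∫⁻ x in Z, ENNReal.ofReal |d n x| = 0 := by
      have := cov n Z hZ_meas Set.inter_subset_left (fun _ => 1)
      simpa [himgZ] using this
    have hdz : ∀ᵐ x ∂volume, x ∈ Z → d n x = 0 := by
      rw [lintegral_eq_zero_iff (by fun_prop)] at hlz
      rw [← ae_restrict_iff' hZ_meas]
      filter_upwards [hlz] with x hx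
      simpa [ENNReal.ofReal_eq_zero, abs_nonpos_iff] using hx
    filter_upwards [hGood n, ae_restrict_mem hI, ae_restrict_of_ae hdz]
      with x hx hxI hxz
    by_cases hcase : fe n x ∈ U
    · have hz : x ∈ Z := ⟨hx.1, hcase⟩
      have : f' n x = 0 := hx.2 ▸ hxz hz
      simp [this]
    · have hfx : f n x ∈ I := hmaps n hxI
      rw [hfe_eq n x hxI] at hcase
      have hFG : F (f n x) = G (f n x) := by
        by_contra hne
        exact hcase (subset_toMeasurable _ _ ⟨hne, hfx⟩)
      rw [hFG]
  -- per-term a.e. identification with a measurable representative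
  have termAE : ∀ n (F : ℝ → ℝ) (F₀ : ℝ → ℝ), F =ᵐ[μ] F₀ →
      (fun x => |f' n x| * F (f n x)) =ᵐ[μ] (fun x => |d n x| * F₀ (fe n x)) := by
    intro n F F₀ hFF₀
    filter_upwards [congrL F F₀ hFF₀ n, hGood n, ae_restrict_mem hI] with x h1 h2 hxI
    rw [h1, h2.2, hfe_eq n x hxI]
  -- lintegral of a term over a measurable subset of I
  have TB : ∀ n (F : ℝ → ℝ), AEStronglyMeasurable F μ → ∀ T : Set ℝ,
      MeasurableSet T → T ⊆ I →
      ∫⁻ x in T, ‖|f' n x| * F (f n x)‖₊ ∂volume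
        = ∫⁻ y in fe n '' (T ∩ D n), ‖F y‖₊ ∂volume := by
    intro n F hF T hT hTI
    set F₀ : ℝ → ℝ := hF.mk F with hF₀def
    have hFF₀ : F =ᵐ[μ] F₀ := hF.ae_eq_mk
    have hF₀m : StronglyMeasurable F₀ := hF.stronglyMeasurable_mk
    have h1 : ∫⁻ x in T, ‖|f' n x| * F (f n x)‖₊ ∂volume
        = ∫⁻ x in T, ENNReal.ofReal |d n x| * (fun y => (‖F₀ y‖₊ : ENNReal)) (fe n x)
          ∂volume := by
      refine lintegral_congr_ae ?_
      have := aeT _ (termAE n F F₀ hFF₀) T hTI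
      filter_upwards [this] with x hx
      rw [hx]
      simp [nnnorm_mul, ENNReal.coe_mul, Real.enorm_eq_ofReal_abs, abs_abs]
      rw [← Real.enorm_eq_ofReal_abs]
      rfl
    have h2 : ∫⁻ x in T, ENNReal.ofReal |d n x| * (fun y => (‖F₀ y‖₊ : ENNReal)) (fe n x)
          ∂volume
        = ∫⁻ x in T ∩ D n, ENNReal.ofReal |d n x|
            * (fun y => (‖F₀ y‖₊ : ENNReal)) (fe n x) ∂volume := by
      refine setLIntegral_congr ?_
      rw [Filter.eventuallyEq_set]
      have hnull : volume (T \ (T ∩ D n)) = 0 := by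
        refine measure_mono_null ?_ (hIDnull n)
        intro x hx
        exact ⟨hTI hx.1, fun hD => hx.2 ⟨hx.1, hD⟩⟩
      have : ∀ᵐ x ∂volume, x ∉ T \ (T ∩ D n) := by
        rw [ae_iff]; simp only [not_not]; exact hnull
      filter_upwards [this] with x hx
      constructor
      · intro hT'
        by_contra hc
        exact hx ⟨hT', hc⟩
      · exact fun h => h.1
    have h3 := cov n (T ∩ D n) (hT.inter (hD_meas n)) Set.inter_subset_right
      (fun y => (‖F₀ y‖₊ : ENNReal))
    have h4 : ∫⁻ y in fe n '' (T ∩ D n), (‖F₀ y‖₊ : ENNReal) ∂volume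
        = ∫⁻ y in fe n '' (T ∩ D n), (‖F y‖₊ : ENNReal) ∂volume := by
      refine lintegral_congr_ae ?_
      have hsub : fe n '' (T ∩ D n) ⊆ I := fun y ⟨z, _, hzy⟩ => hzy ▸ hfe_mem n z
      filter_upwards [aeT _ hFF₀ _ hsub] with x hx
      rw [hx]
    rw [h1, h2, h3, h4]
  -- integrability of a single term
  have TI : ∀ n (F : ℝ → ℝ), Integrable F μ →
      Integrable (fun x => |f' n x| * F (f n x)) μ := by
    intro n F hF
    set F₀ : ℝ → ℝ := hF.1.mk F with hF₀def
    have hFF₀ : F =ᵐ[μ] F₀ := hF.1.ae_eq_mk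
    have hF₀m : StronglyMeasurable F₀ := hF.1.stronglyMeasurable_mk
    constructor
    · refine AEStronglyMeasurable.congr ?_ (termAE n F F₀ hFF₀).symm
      exact (((hd_meas n).abs.stronglyMeasurable.mul
        (hF₀m.comp_measurable (hfe_meas n)))).aestronglyMeasurable
    · rw [HasFiniteIntegral, hμdef]
      rw [show (volume.restrict I : Measure ℝ) = volume.restrict I from rfl]
      have : ∫⁻ x in I, ‖|f' n x| * F (f n x)‖₊ ∂volume
          = ∫⁻ y in fe n '' (I ∩ D n), ‖F y‖₊ ∂volume :=
        TB n F hF.1 I hI (le_refl _)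
      refine lt_of_eq_of_lt this ?_
      calc ∫⁻ y in fe n '' (I ∩ D n), ‖F y‖₊ ∂volume
          ≤ ∫⁻ y in I, ‖F y‖₊ ∂volume := by
            refine lintegral_mono' (Measure.restrict_mono ?_ le_rfl) le_rfl
            exact fun y ⟨z, _, hzy⟩ => hzy ▸ hfe_mem n z
        _ < ⊤ := hF.2
  -- integrability of P₀ F
  have PInt : ∀ F : ℝ → ℝ, Integrable F μ → Integrable (P₀ F) μ := by
    intro F hF
    have : P₀ F = fun x => ∑ n, |f' n x| * F (f n x) := funext fun x => hP₀ F x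
    rw [this]
    exact integrable_finset_sum _ (fun n _ => TI n F hF)
  -- the images are pairwise disjoint
  have hdisj' : ∀ (T : Set ℝ), T ⊆ I → Pairwise fun n m =>
      Disjoint (fe n '' (T ∩ D n)) (fe m '' (T ∩ D m)) := by
    intro T hTI n m hnm
    refine Disjoint.mono ?_ ?_ (hdisj n m hnm)
    · intro y ⟨z, hz, hzy⟩
      exact ⟨z, hz.2.1, by rw [← hzy]; exact (hfe_eq n z (hTI hz.1)).symm⟩
    · intro y ⟨z, hz, hzy⟩
      exact ⟨z, hz.2.1, by rw [← hzy]; exact (hfe_eq m z (hTI hz.1)).symm⟩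
  -- key bound for P₀
  have PBound : ∀ (F : ℝ → ℝ), AEStronglyMeasurable F μ → ∀ T : Set ℝ,
      MeasurableSet T → T ⊆ I →
      ∫⁻ x in T, ‖P₀ F x‖₊ ∂volume
        ≤ ∫⁻ y in ⋃ n, fe n '' (T ∩ D n), ‖F y‖₊ ∂volume := by
    intro F hF T hT hTI
    have step1 : ∫⁻ x in T, ‖P₀ F x‖₊ ∂volume
        ≤ ∑ n, ∫⁻ x in T, ‖|f' n x| * F (f n x)‖₊ ∂volume := by
      rw [← lintegral_finset_sum']
      · refine lintegral_mono (fun x => ?_)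
        rw [hP₀ F x]
        calc (‖∑ n, |f' n x| * F (f n x)‖₊ : ENNReal)
            ≤ ((∑ n, ‖|f' n x| * F (f n x)‖₊ : NNReal) : ENNReal) := by
              exact_mod_cast ENNReal.coe_le_coe.2 (nnnorm_sum_le _ _)
          _ = ∑ n, (‖|f' n x| * F (f n x)‖₊ : ENNReal) := by push_cast; rfl
      · intro n _
        set F₀ : ℝ → ℝ := hF.mk F with hF₀def
        have hmm : AEMeasurable (fun x => ((‖|d n x| * F₀ (fe n x)‖₊ : NNReal) : ENNReal))
            (volume.restrict T) :=
          ((((hd_meas n).abs.mul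
            ((hF.stronglyMeasurable_mk.measurable).comp (hfe_meas n))).nnnorm).coe_nnreal_ennreal).aemeasurable
        refine hmm.congr ?_
        have := aeT _ (termAE n F F₀ hF.ae_eq_mk) T hTI
        filter_upwards [this] with x hx
        rw [hx]
    have step2 : ∀ n, ∫⁻ x in T, ‖|f' n x| * F (f n x)‖₊ ∂volume
        = ∫⁻ y in fe n '' (T ∩ D n), ‖F y‖₊ ∂volume := fun n => TB n F hF T hT hTI
    have step3 : ∑ n, ∫⁻ y in fe n '' (T ∩ D n), ‖F y‖₊ ∂volume
        = ∫⁻ y in ⋃ n, fe n '' (T ∩ D n), ‖F y‖₊ ∂volume := by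
      rw [lintegral_iUnion (fun n => himg n _ (hT.inter (hD_meas n)) Set.inter_subset_right)
        (hdisj' T hTI), tsum_fintype]
    calc ∫⁻ x in T, ‖P₀ F x‖₊ ∂volume
        ≤ ∑ n, ∫⁻ x in T, ‖|f' n x| * F (f n x)‖₊ ∂volume := step1
      _ = ∑ n, ∫⁻ y in fe n '' (T ∩ D n), ‖F y‖₊ ∂volume := by
          exact Finset.sum_congr rfl (fun n _ => step2 n)
      _ = ∫⁻ y in ⋃ n, fe n '' (T ∩ D n), ‖F y‖₊ ∂volume := step3
  -- the refining sets
  set Sm : ℕ → Set ℝ := fun m => Nat.rec I (fun _ s => ⋃ n, fe n '' (s ∩ D n)) m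
    with hSmdef
  have hSm0 : Sm 0 = I := rfl
  have hSmsucc : ∀ m, Sm (m + 1) = ⋃ n, fe n '' (Sm m ∩ D n) := fun m => rfl
  have hSm_meas : ∀ m, MeasurableSet (Sm m) := by
    intro m
    induction m with
    | zero => exact hI
    | succ m ih =>
      rw [hSmsucc]
      exact MeasurableSet.iUnion (fun n =>
        himg n _ (ih.inter (hD_meas n)) Set.inter_subset_right)
  have hSm_subI : ∀ m, Sm m ⊆ I := by
    intro m
    induction m with
    | zero => exact le_refl _
    | succ m ih =>
      rw [hSmsucc]
      exact Set.iUnion_subset (fun n y ⟨z, _, hzy⟩ => hzy ▸ hfe_mem n z)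
  have hSm_anti : Antitone Sm := by
    refine antitone_nat_of_succ_le ?_
    intro m
    induction m with
    | zero =>
      show (⋃ n, fe n '' (Sm 0 ∩ D n)) ⊆ Sm 0
      rw [hSm0]
      exact Set.iUnion_subset (fun n y ⟨z, _, hzy⟩ => hzy ▸ hfe_mem n z)
    | succ m ih =>
      show (⋃ n, fe n '' (Sm (m+1) ∩ D n)) ⊆ ⋃ n, fe n '' (Sm m ∩ D n)
      refine Set.iUnion_mono (fun n => Set.image_mono ?_)
      exact Set.inter_subset_inter_left _ ih
  have hSm_subA : ∀ m, Sm m ⊆ A m := by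
    intro m
    induction m with
    | zero => rw [hSm0, hA0]
    | succ m ih =>
      rw [hSmsucc, hAsucc]
      refine Set.iUnion_mono (fun n => ?_)
      intro y ⟨z, hz, hzy⟩
      exact ⟨z, ih hz.1, by rw [← hzy]; exact (hfe_eq n z (hSm_subI m hz.1)).symm⟩
  -- integrability of iterates
  have ItInt : ∀ (m : ℕ) (F : ℝ → ℝ), Integrable F μ → Integrable (P₀^[m] F) μ := by
    intro m
    induction m with
    | zero => exact fun F hF => hF
    | succ m ih =>
      intro F hF
      rw [Function.iterate_succ_apply]
      exact ih _ (PInt F hF)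
  -- main bound
  have MainBound : ∀ (m : ℕ) (F : ℝ → ℝ), Integrable F μ →
      ∫⁻ x in I, ‖(P₀^[m]) F x‖₊ ∂volume ≤ ∫⁻ y in Sm m, ‖F y‖₊ ∂volume := by
    intro m
    induction m with
    | zero => intro F hF; rw [hSm0]; exact le_refl _
    | succ m ih =>
      intro F hF
      calc ∫⁻ x in I, ‖(P₀^[m+1]) F x‖₊ ∂volume
          = ∫⁻ x in I, ‖(P₀^[m]) (P₀ F) x‖₊ ∂volume := by
            simp only [Function.iterate_succ_apply]
        _ ≤ ∫⁻ y in Sm m, ‖P₀ F y‖₊ ∂volume := ih (P₀ F) (PInt F hF)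
        _ ≤ ∫⁻ y in ⋃ n, fe n '' (Sm m ∩ D n), ‖F y‖₊ ∂volume :=
            PBound F hF.1 (Sm m) (hSm_meas m) (hSm_subI m)
        _ = ∫⁻ y in Sm (m+1), ‖F y‖₊ ∂volume := by rw [hSmsucc]
  -- the vanishing measure
  have Vanish : ∀ (φ : ℝ → ℝ), Integrable φ μ →
      Tendsto (fun m => ∫⁻ y in Sm m, ‖φ y‖₊ ∂volume) atTop (𝓝 0) := by
    intro φ hφ
    set ν : Measure ℝ := μ.withDensity (fun y => (‖φ y‖₊ : ENNReal)) with hνdef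
    have hν_apply : ∀ (T : Set ℝ), MeasurableSet T → T ⊆ I →
        ν T = ∫⁻ y in T, ‖φ y‖₊ ∂volume := by
      intro T hT hTI
      rw [hνdef, withDensity_apply _ hT, hμdef, Measure.restrict_restrict hT,
        Set.inter_eq_self_of_subset_left hTI]
    have hν_fin : ∀ (T : Set ℝ), ν T ≠ ⊤ := by
      intro T
      refine ne_top_of_le_ne_top ?_ (measure_mono (Set.subset_univ T))
      rw [hνdef, withDensity_apply _ MeasurableSet.univ, Measure.restrict_univ]
      exact hφ.2.ne
    have hiInter : ν (⋂ m, Sm m) = 0 := by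
      have hsub : (⋂ m, Sm m) ⊆ ⋂ m, A m := Set.iInter_mono hSm_subA
      have hnull : volume (⋂ m, Sm m) = 0 := measure_mono_null hsub hattr
      rw [hν_apply _ (MeasurableSet.iInter hSm_meas)
        ((Set.iInter_subset Sm 0).trans (hSm_subI 0))]
      exact setLIntegral_measure_zero _ _ hnull
    have htend : Tendsto (ν ∘ Sm) atTop (𝓝 (ν (⋂ m, Sm m))) :=
      tendsto_measure_iInter_atTop (fun m => (hSm_meas m).nullMeasurableSet) hSm_anti
        ⟨0, hν_fin _⟩
    rw [hiInter] at htend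
    refine htend.congr (fun m => ?_)
    exact hν_apply _ (hSm_meas m) (hSm_subI m)
  -- pointwise algebra for partial sums
  have PSM : ∀ (M : ℕ) (x : ℝ),
      P₀ (fun y => ∑ m ∈ Finset.range M, (P₀^[m]) g y) x
        = (∑ m ∈ Finset.range (M+1), (P₀^[m]) g x) - g x := by
    intro M x
    rw [hP₀]
    have h1 : ∀ n : Fin N, |f' n x| * (∑ m ∈ Finset.range M, (P₀^[m]) g (f n x))
        = ∑ m ∈ Finset.range M, |f' n x| * (P₀^[m]) g (f n x) :=
      fun n => Finset.mul_sum _ _ _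
    simp_rw [h1]
    rw [Finset.sum_comm]
    have h2 : ∀ m, (∑ n : Fin N, |f' n x| * (P₀^[m]) g (f n x))
        = (P₀^[m+1]) g x := by
      intro m
      rw [Function.iterate_succ_apply' P₀ m g, hP₀]
    rw [Finset.sum_congr rfl (fun m _ => h2 m)]
    rw [Finset.sum_range_succ' (fun m => (P₀^[m]) g x) M]
    simp
  -- the key convergence lemma
  have KEY : ∀ φ : ℝ → ℝ, Integrable φ μ →
      (∀ᵐ x ∂μ, φ x = (∑ n, |f' n x| * φ (f n x)) + g x) →
      Tendsto (fun M : ℕ =>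
          ∫ x in I, |(∑ m ∈ Finset.range M, (P₀^[m]) g x) - φ x|)
        atTop (𝓝 0) := by
    intro φ hφ heq
    set SM : ℕ → ℝ → ℝ := fun M x => ∑ m ∈ Finset.range M, (P₀^[m]) g x with hSMdef
    have hSMInt : ∀ M, Integrable (SM M) μ :=
      fun M => integrable_finset_sum _ (fun m _ => ItInt m g hg)
    have aeRel : ∀ M, φ =ᵐ[μ] fun x => SM M x + (P₀^[M]) φ x := by
      intro M
      induction M with
      | zero =>
        refine Filter.Eventually.of_forall (fun x => ?_)
        simp [hSMdef]
      | succ M ih =>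
        have hall : ∀ᵐ x ∂μ, ∀ n, |f' n x| * φ (f n x)
            = |f' n x| * (SM M (f n x) + (P₀^[M]) φ (f n x)) := by
          rw [ae_all_iff]
          exact fun n => congrL φ (fun y => SM M y + (P₀^[M]) φ y) ih n
        filter_upwards [heq, hall] with x hx hxall
        rw [hx, Finset.sum_congr rfl (fun n _ => hxall n)]
        have hsplit : ∑ n, |f' n x| * (SM M (f n x) + (P₀^[M]) φ (f n x))
            = (∑ n, |f' n x| * SM M (f n x))
              + ∑ n, |f' n x| * (P₀^[M]) φ (f n x) := by
          rw [← Finset.sum_add_distrib]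
          exact Finset.sum_congr rfl (fun n _ => by ring)
        rw [hsplit, ← hP₀ (SM M) x, ← hP₀ ((P₀^[M]) φ) x]
        have hp1 : P₀ (SM M) x = SM (M+1) x - g x := PSM M x
        have hp2 : P₀ ((P₀^[M]) φ) x = (P₀^[M+1]) φ x :=
          (Function.iterate_succ_apply' P₀ M φ ▸ rfl)
        rw [hp1, hp2]
        ring
    have hIntEq : ∀ M, ∫ x in I, |SM M x - φ x|
        = (∫⁻ x in I, ‖(P₀^[M]) φ x‖₊ ∂volume).toReal := by
      intro M
      have h1 : Integrable (fun x => SM M x - φ x) μ := (hSMInt M).sub hφ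
      have h2 : ∫ x in I, |SM M x - φ x| = ∫ x in I, ‖SM M x - φ x‖ := by
        simp_rw [Real.norm_eq_abs]
      rw [h2]
      rw [show (volume.restrict I : Measure ℝ) = μ from rfl]
      rw [integral_norm_eq_lintegral_enorm h1.1]
      congr 1
      refine lintegral_congr_ae ?_
      filter_upwards [aeRel M] with x hx
      rw [hx]
      rw [show SM M x - (SM M x + (P₀^[M]) φ x) = -((P₀^[M]) φ x) from by ring]
      exact enorm_neg _
    have hfin : ∀ M, (∫⁻ y in Sm M, ‖φ y‖₊ ∂volume) ≠ ⊤ := by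
      intro M
      refine ne_top_of_le_ne_top hφ.2.ne ?_
      rw [hμdef]
      exact lintegral_mono' (Measure.restrict_mono (hSm_subI M) le_rfl) le_rfl
    have hbound : ∀ M, ∫ x in I, |SM M x - φ x|
        ≤ (∫⁻ y in Sm M, ‖φ y‖₊ ∂volume).toReal := by
      intro M
      rw [hIntEq M]
      exact ENNReal.toReal_mono (hfin M) (MainBound M φ hφ)
    have htoReal : Tendsto (fun M => (∫⁻ y in Sm M, ‖φ y‖₊ ∂volume).toReal)
        atTop (𝓝 0) := by
      have := (ENNReal.tendsto_toReal (a := 0) (by simp)).comp (Vanish φ hφ)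
      exact this
    exact squeeze_zero (fun M => integral_nonneg (fun x => abs_nonneg _)) hbound htoReal
  refine ⟨⟨?_, ?_⟩, fun φ hφ heq => KEY φ hφ heq⟩
  · rintro ⟨φ, hφ, heq⟩
    exact ⟨φ, hφ, KEY φ hφ heq⟩
  · rintro ⟨s, hs, hconv⟩
    refine ⟨s, hs, ?_⟩
    set SM : ℕ → ℝ → ℝ := fun M x => ∑ m ∈ Finset.range M, (P₀^[m]) g x with hSMdef
    have hSMInt : ∀ M, Integrable (SM M) μ :=
      fun M => integrable_finset_sum _ (fun m _ => ItInt m g hg)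
    set K : ℕ → ENNReal := fun M => ∫⁻ x in I, ‖SM M x - s x‖₊ ∂volume with hKdef
    have hKeq : ∀ M, K M = ENNReal.ofReal (∫ x in I, |SM M x - s x|) := by
      intro M
      have h1 : Integrable (fun x => SM M x - s x) μ := (hSMInt M).sub hs
      have h2 : ∫ x in I, |SM M x - s x| = ∫ x in I, ‖SM M x - s x‖ := by
        simp_rw [Real.norm_eq_abs]
      rw [h2, ofReal_integral_norm_eq_lintegral_enorm h1]
      rfl
    have hK0 : Tendsto K atTop (𝓝 0) := by
      have := ENNReal.tendsto_ofReal hconv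
      rw [ENNReal.ofReal_zero] at this
      refine this.congr (fun M => (hKeq M).symm)
    have hbound : ∀ M, ∫⁻ x in I, ‖P₀ (SM M) x - P₀ s x‖₊ ∂volume ≤ K M := by
      intro M
      have h1 : Integrable (fun y => SM M y - s y) μ := (hSMInt M).sub hs
      have hptw : ∀ x, P₀ (SM M) x - P₀ s x = P₀ (fun y => SM M y - s y) x := by
        intro x
        rw [hP₀, hP₀, hP₀, ← Finset.sum_sub_distrib]
        exact Finset.sum_congr rfl (fun n _ => by ring)
      calc ∫⁻ x in I, ‖P₀ (SM M) x - P₀ s x‖₊ ∂volume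
          = ∫⁻ x in I, ‖P₀ (fun y => SM M y - s y) x‖₊ ∂volume := by
            simp_rw [hptw]
        _ ≤ ∫⁻ y in ⋃ n, fe n '' (I ∩ D n), ‖SM M y - s y‖₊ ∂volume :=
            PBound _ h1.1 I hI (le_refl _)
        _ ≤ ∫⁻ y in I, ‖SM M y - s y‖₊ ∂volume := by
            refine lintegral_mono' (Measure.restrict_mono ?_ le_rfl) le_rfl
            exact Set.iUnion_subset (fun n y ⟨z, _, hzy⟩ => hzy ▸ hfe_mem n z)
        _ = K M := rfl
    have hRzero : ∫⁻ x in I, ‖s x - (P₀ s x + g x)‖₊ ∂volume = 0 := by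
      have hle : ∀ M, ∫⁻ x in I, ‖s x - (P₀ s x + g x)‖₊ ∂volume
          ≤ K (M+1) + K M := by
        intro M
        have haem : AEMeasurable (fun x => ((‖s x - SM (M+1) x‖₊ : NNReal) : ENNReal))
            (volume.restrict I) := by
          have : AEStronglyMeasurable (fun x => s x - SM (M+1) x) μ :=
            (hs.sub (hSMInt (M+1))).1
          exact this.enorm
        calc ∫⁻ x in I, ‖s x - (P₀ s x + g x)‖₊ ∂volume
            ≤ ∫⁻ x in I, ((‖s x - SM (M+1) x‖₊ : ENNReal)
                + ‖P₀ (SM M) x - P₀ s x‖₊) ∂volume := by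
              refine lintegral_mono (fun x => ?_)
              have hde : s x - (P₀ s x + g x)
                  = (s x - SM (M+1) x) + (P₀ (SM M) x - P₀ s x) := by
                have := PSM M x
                have hSMx : SM (M+1) x = P₀ (SM M) x + g x := by
                  rw [this]; ring
                rw [hSMx]; ring
              rw [hde]
              calc ((‖(s x - SM (M+1) x) + (P₀ (SM M) x - P₀ s x)‖₊ : ENNReal))
                  ≤ ((‖s x - SM (M+1) x‖₊ + ‖P₀ (SM M) x - P₀ s x‖₊ : NNReal) : ENNReal) :=
                    ENNReal.coe_le_coe.2 (nnnorm_add_le _ _)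
                _ = _ := by push_cast; rfl
          _ = (∫⁻ x in I, (‖s x - SM (M+1) x‖₊ : ENNReal) ∂volume)
                + ∫⁻ x in I, (‖P₀ (SM M) x - P₀ s x‖₊ : ENNReal) ∂volume :=
              lintegral_add_left' haem _
          _ ≤ K (M+1) + K M := by
              refine add_le_add ?_ (hbound M)
              refine le_of_eq (lintegral_congr (fun x => ?_))
              congr 1
              rw [show s x - SM (M+1) x = -(SM (M+1) x - s x) from by ring, nnnorm_neg]
      have hK2 : Tendsto (fun M => K (M+1) + K M) atTop (𝓝 0) := by
        have h1 : Tendsto (fun M => K (M+1)) atTop (𝓝 0) :=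
          hK0.comp (tendsto_add_atTop_nat 1)
        simpa using h1.add hK0
      have := ge_of_tendsto' hK2 hle
      exact le_antisymm this zero_le
    have hae : ∀ᵐ x ∂μ, s x - (P₀ s x + g x) = 0 := by
      have haem : AEMeasurable (fun x => ((‖s x - (P₀ s x + g x)‖₊ : NNReal) : ENNReal)) μ := by
        have : AEStronglyMeasurable (fun x => s x - (P₀ s x + g x)) μ :=
          (hs.sub ((PInt s hs).add hg)).1
        exact this.enorm
      have h0 : ∫⁻ x, ((‖s x - (P₀ s x + g x)‖₊ : NNReal) : ENNReal) ∂μ = 0 := by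
        rw [hμdef]; exact hRzero
      rw [lintegral_eq_zero_iff' haem] at h0
      filter_upwards [h0] with x hx
      simpa using hx
    filter_upwards [hae] with x hx
    have : s x = P₀ s x + g x := by linarith [hx]
    rw [this, hP₀ s x]
end

section
/- Let N ≥ 2, let α₁, …, α_N be real numbers and β₁, …, β_N be non-zero real numbers such that 0 ≤ min{β₁, α₁+β₁} < max{β₁, α₁+β₁} ≤ min{β₂, α₂+β₂} < max{β₂, α₂+β₂} ≤ ⋯ ≤ min{β_N, α_N+β_N} < max{β_N, α_N+β_N} ≤ 1 and ⋃_{n=1}^N [min{β_n, α_n+β_n}, max{β_n, α_n+β_n}] ≠ [0,1]. Put f_n(x) = α_n x + β_n for x ∈ [0,1], A₀ = [0,1], and A_m = ⋃_{n=1}^N f_n(A_{m−1}) for m ∈ ℕ. Then the attractor A_* = ⋂_{m∈ℕ} A_m of the iterated function system {f₁, …, f_N} has Lebesgue measure zero. -/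
/-!
The image `fₙ([0,1])` is the `n`-th interval, of length `|αₙ|`. Since the intervals overlap
at most in endpoints and leave a gap in `[0,1]` (their union is closed, so it misses an
open set), the contraction ratio `c = ∑ₙ |αₙ|` is `< 1`. Each `fₙ` scales Lebesgue measure
by `|αₙ|`, so `λ(A_{m+1}) ≤ c · λ(A_m)`, whence `λ(A_m) ≤ cᵐ → 0`.
-/

open MeasureTheory Filter Topology Set
open scoped Pointwise

theorem Real.volume_image_mul_add (a b : ℝ) (s : Set ℝ) :
    volume ((fun x => a * x + b) '' s) = ENNReal.ofReal |a| * volume s := by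
  have : (fun x => a * x + b) '' s = (· + b) '' (a • s) := by
    simp only [← image_smul, image_image, smul_eq_mul]
  rw [this, image_add_right, measure_preimage_add_right, Measure.addHaar_smul]
  simp

theorem Real.volume_iUnion_image_mul_add_le {ι : Type*} [Fintype ι] (a b : ι → ℝ)
    (s : Set ℝ) :
    volume (⋃ i, (fun x => a i * x + b i) '' s) ≤ (∑ i, ENNReal.ofReal |a i|) * volume s :=
  calc volume (⋃ i, (fun x => a i * x + b i) '' s)
      ≤ ∑ i, volume ((fun x => a i * x + b i) '' s) := measure_iUnion_fintype_le _ _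
    _ = (∑ i, ENNReal.ofReal |a i|) * volume s := by
      simp only [Real.volume_image_mul_add, Finset.sum_mul]

theorem Real.volume_iUnion_Icc_of_le {ι : Type*} [LinearOrder ι] [Countable ι] (l u : ι → ℝ)
    (h : ∀ i j, i < j → u i ≤ l j) :
    volume (⋃ i, Icc (l i) (u i)) = ∑' i, ENNReal.ofReal (u i - l i) := by
  have hdisj : Pairwise (Function.onFun (AEDisjoint volume) fun i => Icc (l i) (u i)) := by
    have key : ∀ i j, i < j → AEDisjoint volume (Icc (l i) (u i)) (Icc (l j) (u j)) :=
      fun i j hij => Set.Subsingleton.measure_zero (fun x hx y hy => by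
        linarith [h i j hij, hx.1.2, hx.2.1, hy.1.2, hy.2.1]) _
    intro i j hij
    rcases hij.lt_or_gt with hij | hji
    exacts [key i j hij, (key j i hji).symm]
  simp only [measure_iUnion₀ hdisj fun i => measurableSet_Icc.nullMeasurableSet, Real.volume_Icc]

theorem Real.volume_lt_volume_Icc_of_isClosed {a b : ℝ} (hab : a < b) {s : Set ℝ}
    (hs : IsClosed s) (hsub : s ⊆ Icc a b) (hne : s ≠ Icc a b) :
    volume s < volume (Icc a b) := by
  obtain ⟨x, hxI, hxs⟩ : (Ioo a b \ s).Nonempty := by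
    rw [sdiff_nonempty]
    intro h
    exact hne (hsub.antisymm (closure_Ioo hab.ne ▸ hs.closure_subset_iff.mpr h))
  have hpos : 0 < volume (Icc a b \ s) :=
    (isOpen_Ioo.sdiff hs).measure_pos volume ⟨x, hxI, hxs⟩ |>.trans_le
      (measure_mono (sdiff_subset_sdiff_left Ioo_subset_Icc_self))
  have hfin : volume s ≠ ⊤ := (measure_mono hsub).trans_lt measure_Icc_lt_top |>.ne
  calc volume s < volume s + volume (Icc a b \ s) := ENNReal.lt_add_right hfin hpos.ne'
    _ = volume (Icc a b) := by
      rw [measure_add_sdiff hs.nullMeasurableSet, union_eq_right.mpr hsub]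

theorem MeasureTheory.measure_iInter_eq_zero_of_le_mul {α : Type*} [MeasurableSpace α]
    {μ : Measure α} {s : ℕ → Set α} {c : ENNReal} (hc : c < 1) (h0 : μ (s 0) ≠ ⊤)
    (hs : ∀ m, μ (s (m + 1)) ≤ c * μ (s m)) : μ (⋂ m, s m) = 0 := by
  have hle : ∀ m, μ (s m) ≤ c ^ m * μ (s 0) := by
    intro m
    induction m with
    | zero => simp
    | succ m ih => calc μ (s (m + 1)) ≤ c * μ (s m) := hs m
        _ ≤ c * (c ^ m * μ (s 0)) := by gcongr
        _ = c ^ (m + 1) * μ (s 0) := by rw [pow_succ', mul_assoc]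
  have hlim : Tendsto (fun m => c ^ m * μ (s 0)) atTop (𝓝 0) := by
    simpa using ENNReal.Tendsto.mul_const
      (ENNReal.tendsto_pow_atTop_nhds_zero_of_lt_one hc) (Or.inr h0)
  exact le_antisymm
    (ge_of_tendsto' hlim fun m => (measure_mono (iInter_subset s m)).trans (hle m)) zero_le

theorem stmt17_general (N : ℕ) (α β : Fin N → ℝ)
    (h0 : ∀ n, 0 ≤ min (β n) (α n + β n))
    (h1 : ∀ n, max (β n) (α n + β n) ≤ 1)
    (horder : ∀ n m : Fin N, n < m →
      max (β n) (α n + β n) ≤ min (β m) (α m + β m))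
    (hne : (⋃ n, Set.Icc (min (β n) (α n + β n)) (max (β n) (α n + β n))) ≠
      Set.Icc 0 1)
    (A : ℕ → Set ℝ) (hA0 : A 0 = Set.Icc 0 1)
    (hAsucc : ∀ m : ℕ, A (m + 1) = ⋃ n, (fun x => α n * x + β n) '' A m) :
    volume (⋂ m, A m) = 0 := by
  set U := ⋃ n, Set.Icc (min (β n) (α n + β n)) (max (β n) (α n + β n))
  have hU : volume U = ∑ n, ENNReal.ofReal |α n| := by
    simp only [U, Real.volume_iUnion_Icc_of_le _ _ horder, tsum_fintype, max_sub_min_eq_abs,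
      add_sub_cancel_right]
  have hU_lt : volume U < 1 := by
    simpa using Real.volume_lt_volume_Icc_of_isClosed zero_lt_one
      (isClosed_iUnion_of_finite fun _ => isClosed_Icc)
      (iUnion_subset fun n => Icc_subset_Icc (h0 n) (h1 n)) hne
  refine measure_iInter_eq_zero_of_le_mul hU_lt (by simp [hA0]) fun m => ?_
  rw [hAsucc, hU]
  exact Real.volume_iUnion_image_mul_add_le α β (A m)

/-- Let `N ≥ 2`, let `α₁, …, α_N` be reals and `β₁, …, β_N` non-zero
reals such that the intervals `[min{βₙ, αₙ+βₙ}, max{βₙ, αₙ+βₙ}]` are nondegenerate,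
pairwise ordered (the `n`-th lies to the left of the `m`-th for `n < m`), contained in
`[0,1]`, and their union is not all of `[0,1]`. Put `fₙ(x) = αₙ x + βₙ`, `A₀ = [0,1]` and
`A_m = ⋃ₙ fₙ(A_{m−1})`. Then the attractor `A_* = ⋂ₘ A_m` of the iterated function system
`{f₁, …, f_N}` has Lebesgue measure zero. -/
theorem stmt17 (N : ℕ) (hN : 2 ≤ N) (α β : Fin N → ℝ) (hβ : ∀ n, β n ≠ 0)
    (h0 : ∀ n, 0 ≤ min (β n) (α n + β n))
    (h1 : ∀ n, max (β n) (α n + β n) ≤ 1)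
    (hlt : ∀ n, min (β n) (α n + β n) < max (β n) (α n + β n))
    (horder : ∀ n m : Fin N, n < m →
      max (β n) (α n + β n) ≤ min (β m) (α m + β m))
    (hne : (⋃ n, Set.Icc (min (β n) (α n + β n)) (max (β n) (α n + β n))) ≠
      Set.Icc 0 1)
    (A : ℕ → Set ℝ) (hA0 : A 0 = Set.Icc 0 1)
    (hAsucc : ∀ m : ℕ, A (m + 1) = ⋃ n, (fun x => α n * x + β n) '' A m) :
    volume (⋂ m, A m) = 0 :=
  stmt17_general N α β h0 h1 horder hne A hA0 hAsucc
end
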